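/- Let n1, n2, n3, n4, m be nonnegative integers with n1 > n2, n3 ≥ n4, and m ≤ n1; let q = max(n1, n2, n3, n4, m) and let Q be the q×q shift matrix over 𝔽₂. Then for every pair of q×q matrices G_A, G_B over 𝔽₂, with G_S = Q^{q−n3} G_A Q^{q−n1} + Q^{q−n4} G_B Q^{q−n2} and G_M = Q^{q−n3} G_A Q^{q−m} + Q^{q−n4} G_B Q^{q−m}, one has rank(G_S) − dim(range(G_S) ∩ range(G_M)) ≤ min(n1 − m + min(m, n4), n3). -/

import Mathlib

/-- The `q × q` lower shift matrix over `𝔽₂`: entry `(i, j)` is `1` iff `i = j + 1`. -/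
def shiftQ (q : ℕ) : Matrix (Fin q) (Fin q) (ZMod 2) :=
  Matrix.of fun i j => if (i : ℕ) = (j : ℕ) + 1 then 1 else 0

/-- Source-to-destination transfer matrix
`G_S = Q^(q-n3) G_A Q^(q-n1) + Q^(q-n4) G_B Q^(q-n2)`. -/
def GSmat (q n1 n2 n3 n4 : ℕ) (GA GB : Matrix (Fin q) (Fin q) (ZMod 2)) :
    Matrix (Fin q) (Fin q) (ZMod 2) :=
  shiftQ q ^ (q - n3) * GA * shiftQ q ^ (q - n1) +
    shiftQ q ^ (q - n4) * GB * shiftQ q ^ (q - n2)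

/-- Interference transfer matrix
`G_M = Q^(q-n3) G_A Q^(q-m) + Q^(q-n4) G_B Q^(q-m)`. -/
def GMmat (q n3 n4 m : ℕ) (GA GB : Matrix (Fin q) (Fin q) (ZMod 2)) :
    Matrix (Fin q) (Fin q) (ZMod 2) :=
  shiftQ q ^ (q - n3) * GA * shiftQ q ^ (q - m) +
    shiftQ q ^ (q - n4) * GB * shiftQ q ^ (q - m)

/-- The achievable rate `rank G_S - dim (range G_S ∩ range G_M)` of a linear scheme. -/
noncomputable def linRate (q : ℕ) (GS GM : Matrix (Fin q) (Fin q) (ZMod 2)) : ℕ :=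
  GS.rank - Module.finrank (ZMod 2)
    ↥(LinearMap.range GS.mulVecLin ⊓ LinearMap.range GM.mulVecLin)

/-!
Factoring `G_S = X Q^(q-n1) = Q^(q-n3) Y` bounds `rank G_S`, hence the rate, by `n1` and by `n3`.
When `n4 < m`: since `Q^(q-n1) Q^(n1-m) = Q^(q-m)`, the matrix `G_S Q^(n1-m)` agrees with `G_M`
up to a matrix with range in `range Q^(q-n4)`, of dimension `n4`; and `range G_S` is spanned by
`range (G_S Q^(n1-m))` together with the first `n1 - m` columns of `G_S`. So `range G_S` lies in
`range G_M` plus a space of dimension `n1 - m + n4`, and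
`rank G_S - dim (range G_S ∩ range G_M) = dim (range G_S + range G_M) - rank G_M ≤ n1 - m + n4`.
-/
open Matrix Module Submodule

theorem Submodule.finrank_sub_finrank_inf_le_of_le_sup {K V : Type*} [Field K] [AddCommGroup V]
    [Module K V] [FiniteDimensional K V] {S M T : Submodule K V} (h : S ≤ M ⊔ T) :
    finrank K S - finrank K ↥(S ⊓ M) ≤ finrank K T := by
  have hdim := finrank_sup_add_finrank_inf_eq S M
  have hsup : finrank K ↥(S ⊔ M) ≤ finrank K ↥(M ⊔ T) := finrank_mono (sup_le h le_sup_left)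
  have hsum := finrank_add_le_finrank_add_finrank M T
  omega

section Shift

variable {q : ℕ}

theorem shiftQ_pow_apply (k : ℕ) (i j : Fin q) :
    (shiftQ q ^ k) i j = if (i : ℕ) = j + k then 1 else 0 := by
  induction k generalizing i j with
  | zero => simp [one_apply, Fin.ext_iff]
  | succ k ih =>
    rw [pow_succ, mul_apply]
    by_cases hj : (j : ℕ) + 1 < q
    · rw [Finset.sum_eq_single ⟨j + 1, hj⟩]
      · rw [ih]
        simp [shiftQ, add_right_comm, add_assoc]
      · intro l _ hl
        simp [shiftQ, Fin.ext_iff.not.mp hl]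
      · simp
    · rw [Finset.sum_eq_zero, if_neg (by omega)]
      intro l _
      simp [shiftQ, show (l : ℕ) ≠ j + 1 by omega]

theorem shiftQ_pow_eq_zero {k : ℕ} (hk : q ≤ k) : shiftQ q ^ k = 0 := by
  ext i j
  simp [shiftQ_pow_apply, show (i : ℕ) ≠ j + k by omega]

theorem col_shiftQ_pow {k : ℕ} (j : Fin q) (h : (j : ℕ) + k < q) :
    (shiftQ q ^ k).col j = Pi.single ⟨j + k, h⟩ 1 := by
  ext i
  simp [shiftQ_pow_apply, Pi.single_apply, Fin.ext_iff]

theorem col_mul_shiftQ_pow {m : Type*} (A : Matrix m (Fin q) (ZMod 2)) {k : ℕ} (j : Fin q)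
    (h : (j : ℕ) + k < q) : (A * shiftQ q ^ k).col j = A.col ⟨j + k, h⟩ := by
  rw [← mulVec_single_one A, ← col_shiftQ_pow j h]
  rfl

theorem range_mulVecLin_le_span_col_sup_range_mul_shiftQ_pow {m : Type*}
    (A : Matrix m (Fin q) (ZMod 2)) {k : ℕ} (hk : k ≤ q) :
    LinearMap.range A.mulVecLin ≤
      span (ZMod 2) (Set.range fun i : Fin k => A.col (Fin.castLE hk i)) ⊔
        LinearMap.range (A * shiftQ q ^ k).mulVecLin := by
  rw [range_mulVecLin A, span_le]
  rintro _ ⟨j, rfl⟩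
  by_cases hj : (j : ℕ) < k
  · exact mem_sup_left (subset_span ⟨⟨j, hj⟩, rfl⟩)
  · have hcol := col_mul_shiftQ_pow A ⟨j - k, by omega⟩ (k := k) (by rw [Fin.val_mk]; omega)
    simp only [Nat.sub_add_cancel (not_lt.mp hj)] at hcol
    rw [← hcol]
    exact mem_sup_right (by rw [range_mulVecLin]; exact subset_span ⟨_, rfl⟩)

theorem rank_shiftQ_pow_le (k : ℕ) : (shiftQ q ^ k).rank ≤ q - k := by
  -- `Q^k Q^(q-k) = Q^q = 0`, so only the first `q - k` columns of `Q^k` contribute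
  have h := range_mulVecLin_le_span_col_sup_range_mul_shiftQ_pow (shiftQ q ^ k) (Nat.sub_le q k)
  rw [← pow_add, shiftQ_pow_eq_zero (k := k + (q - k)) (by omega), mulVecLin_zero,
    LinearMap.range_zero, sup_bot_eq] at h
  exact (finrank_mono h).trans ((finrank_range_le_card _).trans_eq (Fintype.card_fin _))

end Shift

section Transfer

variable {q n1 n2 n3 n4 m : ℕ} (GA GB : Matrix (Fin q) (Fin q) (ZMod 2))

theorem rank_GSmat_le_n1 (h21 : n2 ≤ n1) (hn1 : n1 ≤ q) :
    (GSmat q n1 n2 n3 n4 GA GB).rank ≤ n1 := by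
  have hfactor : GSmat q n1 n2 n3 n4 GA GB =
      (shiftQ q ^ (q - n3) * GA + shiftQ q ^ (q - n4) * GB * shiftQ q ^ (n1 - n2)) *
        shiftQ q ^ (q - n1) := by
    rw [GSmat, show q - n2 = n1 - n2 + (q - n1) by omega, pow_add]
    noncomm_ring
  rw [hfactor]
  exact (rank_mul_le_right _ _).trans ((rank_shiftQ_pow_le _).trans (by omega))

theorem rank_GSmat_le_n3 (h43 : n4 ≤ n3) (hn3 : n3 ≤ q) :
    (GSmat q n1 n2 n3 n4 GA GB).rank ≤ n3 := by
  have hfactor : GSmat q n1 n2 n3 n4 GA GB =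
      shiftQ q ^ (q - n3) *
        (GA * shiftQ q ^ (q - n1) + shiftQ q ^ (n3 - n4) * GB * shiftQ q ^ (q - n2)) := by
    rw [GSmat, show q - n4 = q - n3 + (n3 - n4) by omega, pow_add]
    noncomm_ring
  rw [hfactor]
  exact (rank_mul_le_left _ _).trans ((rank_shiftQ_pow_le _).trans (by omega))

theorem range_GSmat_mul_shiftQ_pow_le (hm : m ≤ n1) (hn1 : n1 ≤ q) :
    LinearMap.range (GSmat q n1 n2 n3 n4 GA GB * shiftQ q ^ (n1 - m)).mulVecLin ≤
      LinearMap.range (GMmat q n3 n4 m GA GB).mulVecLin ⊔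
        LinearMap.range (shiftQ q ^ (q - n4)).mulVecLin := by
  have hsplit : GSmat q n1 n2 n3 n4 GA GB * shiftQ q ^ (n1 - m) =
      GMmat q n3 n4 m GA GB +
        shiftQ q ^ (q - n4) *
          (GB * (shiftQ q ^ (q - n2) * shiftQ q ^ (n1 - m) - shiftQ q ^ (q - m))) := by
    rw [GSmat, GMmat, show q - m = q - n1 + (n1 - m) by omega, pow_add]
    noncomm_ring
  rw [hsplit, mulVecLin_add, mulVecLin_mul]
  exact (LinearMap.range_add_le _ _).trans (sup_le_sup_left (LinearMap.range_comp_le_range _ _) _)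

end Transfer

/-- Case `n1 > n2`, `n3 ≥ n4`, `m ≤ n1`: upper bound on the achievable rate. -/
theorem rate_upper_bound_case1
    (n1 n2 n3 n4 m q : ℕ) (hq : q = max n1 (max n2 (max n3 (max n4 m))))
    (h12 : n2 < n1) (h34 : n4 ≤ n3) (hm : m ≤ n1)
    (GA GB : Matrix (Fin q) (Fin q) (ZMod 2)) :
    linRate q (GSmat q n1 n2 n3 n4 GA GB) (GMmat q n3 n4 m GA GB)
      ≤ min (n1 - m + min m n4) n3 := by
  have hn1 : n1 ≤ q := by omega
  have hrate : linRate q (GSmat q n1 n2 n3 n4 GA GB) (GMmat q n3 n4 m GA GB) ≤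
      (GSmat q n1 n2 n3 n4 GA GB).rank := Nat.sub_le _ _
  refine le_min ?_ (hrate.trans (rank_GSmat_le_n3 GA GB h34 (by omega)))
  rcases le_total m n4 with hm4 | hm4
  · rw [min_eq_left hm4, Nat.sub_add_cancel hm]
    exact hrate.trans (rank_GSmat_le_n1 GA GB h12.le hn1)
  · rw [min_eq_right hm4]
    have hcover := (range_mulVecLin_le_span_col_sup_range_mul_shiftQ_pow
      (GSmat q n1 n2 n3 n4 GA GB) (k := n1 - m) (by omega)).trans
        (sup_le_sup_left (range_GSmat_mul_shiftQ_pow_le GA GB hm hn1) _)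
    rw [sup_left_comm] at hcover
    refine (finrank_sub_finrank_inf_le_of_le_sup hcover).trans
      ((finrank_add_le_finrank_add_finrank _ _).trans (add_le_add ?_ ?_))
    · exact (finrank_range_le_card _).trans_eq (Fintype.card_fin _)
    · exact (rank_shiftQ_pow_le _).trans (by omega)
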